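/- arXiv:math/0609164 — 5 statements merged into one kernel-verified Lean document; each statement's English description precedes it below -/
import Mathlib

section
/- For all nonnegative integers k, i with 0 ≤ i ≤ k, and any real (or complex) number ℓ, the identity binom(k,i)·(2ℓ+i)_{k-i}·(2ℓ+k+i) + binom(k,i-1)·(2ℓ+i-1)_{k+1-i} = binom(k+1,i)·(2ℓ+i)_{k+1-i} holds, where (x)_n = x(x+1)⋯(x+n-1) is the Pochhammer symbol and binom(k,-1)=0. -/
/-- For nonnegative integers `k, i` with `i ≤ k` and any complex `ℓ`,
`C(k,i)·(2ℓ+i)_{k-i}·(2ℓ+k+i) + C(k,i-1)·(2ℓ+i-1)_{k+1-i} = C(k+1,i)·(2ℓ+i)_{k+1-i}`,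
where `(x)_n` is the Pochhammer symbol and `C(k,-1) = 0`. -/
theorem pochhammer_binom_identity (k i : ℕ) (hik : i ≤ k) (ℓ : ℂ) :
    (k.choose i : ℂ) * (ascPochhammer ℂ (k - i)).eval (2 * ℓ + i) * (2 * ℓ + k + i)
      + (if i = 0 then 0 else (k.choose (i - 1) : ℂ) *
          (ascPochhammer ℂ (k + 1 - i)).eval (2 * ℓ + i - 1))
    = ((k + 1).choose i : ℂ) * (ascPochhammer ℂ (k + 1 - i)).eval (2 * ℓ + i) := by
  obtain ⟨n, rfl⟩ := Nat.exists_eq_add_of_le hik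
  rcases Nat.eq_zero_or_pos i with rfl | hi
  · simp [ascPochhammer_succ_eval]

  · obtain ⟨j, rfl⟩ := Nat.exists_eq_add_of_le hi
    rw [if_neg (by omega)]
    have h1 : 1 + j + n - (1 + j) = n := by omega
    have h2 : 1 + j + n + 1 - (1 + j) = n + 1 := by omega
    have h3 : 1 + j - 1 = j := by omega
    rw [h1, h2, h3]
    have hsl : (ascPochhammer ℂ (n + 1)).eval (2 * ℓ + ↑(1 + j) - 1)
        = (2 * ℓ + ↑(1 + j) - 1) * (ascPochhammer ℂ n).eval (2 * ℓ + ↑(1 + j)) := by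
      rw [ascPochhammer_succ_left]
      simp [Polynomial.eval_comp]

    rw [hsl, ascPochhammer_succ_eval]
    have hc1 : ((1 + j + n).choose (j + 1) : ℂ) * (j + 1)
        = ((1 + j + n).choose j : ℂ) * (n + 1) := by
      have := Nat.add_one_mul_choose_eq (1 + j + n) j
      have h : (1 + j + n).choose (j + 1) * (j + 1) = (1 + j + n).choose j * (n + 1) := by
        rw [Nat.choose_succ_right_eq]
        congr 1
        omega
      exact_mod_cast congrArg (Nat.cast : ℕ → ℂ) h
    have hc2 : ((1 + j + n + 1).choose (1 + j) : ℂ)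
        = ((1 + j + n).choose (1 + j) : ℂ) + ((1 + j + n).choose j : ℂ) := by
      have : (1 + j + n + 1).choose (1 + j) = (1 + j + n).choose j + (1 + j + n).choose (1 + j) := by
        rw [show 1 + j = j + 1 by ring, Nat.choose_succ_succ]

      push_cast [this]; ring
    rw [hc2]
    have hj1 : ((1 + j + n).choose (1 + j) : ℂ) = ((1 + j + n).choose (j + 1) : ℂ) := by
      norm_num [Nat.add_comm]
    rw [hj1]
    push_cast
    linear_combination (ascPochhammer ℂ n).eval (2 * ℓ + (1 + j)) * hc1
end

section
/- Let g be a holomorphic self-map of the unit disc with nonvanishing derivative, and suppose there is a constant c such that g''(z) = -2c·g'(z)^{3/2} for all z in the disc (for a fixed holomorphic branch of g'(z)^{1/2}). Then for every holomorphic function f on the disc, every complex number ℓ, and every nonnegative integer k, the k-th derivative of (g')^ℓ·(f∘g) equals the sum over i = 0,…,k of binom(k,i)·(2ℓ+i)_{k-i}·(-c)^{k-i}·(g')^{ℓ+(k+i)/2}·(f^{(i)}∘g), where powers of g' are defined via the fixed branch. -/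
/-!
Write `L = log g'`. The hypothesis `g'' = -2c (g')^{3/2}` says `L' = -2c e^{L/2}`, so the functions
`T m i = e^{(ℓ + m/2) L} · (f⁽ⁱ⁾ ∘ g)` satisfy
`T m i' = -c (2ℓ + m) · T (m+1) i + T (m+2) (i+1)`.
Starting from `T 0 0 = (g')^ℓ (f ∘ g)`, the `k`-th derivative is therefore a combination of the
`T (k+i) i`, whose coefficients obey a Pascal-type recurrence in `k`; the closed form
`C(k,i) (2ℓ+i)_{k-i} (-c)^{k-i}` satisfies it.
-/

open Complex Metric Finset

noncomputable def multiplierCoeff (x c : ℂ) (k i : ℕ) : ℂ :=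
  k.choose i * (ascPochhammer ℂ (k - i)).eval (x + i) * (-c) ^ (k - i)

lemma ascPochhammer_succ_eval_left {S : Type*} [CommSemiring S] (n : ℕ) (y : S) :
    (ascPochhammer S (n + 1)).eval y = y * (ascPochhammer S n).eval (y + 1) := by
  simp [ascPochhammer_succ_left, Polynomial.eval_comp]

namespace multiplierCoeff

variable (x c : ℂ)

lemma of_lt {k i : ℕ} (h : k < i) : multiplierCoeff x c k i = 0 := by
  simp [multiplierCoeff, Nat.choose_eq_zero_of_lt h]

lemma self (k : ℕ) : multiplierCoeff x c k k = 1 := by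
  simp [multiplierCoeff]

lemma succ_zero (k : ℕ) :
    multiplierCoeff x c (k + 1) 0 = -c * (x + k) * multiplierCoeff x c k 0 := by
  simp only [multiplierCoeff, Nat.choose_zero_right, Nat.sub_zero, Nat.cast_zero,
    ascPochhammer_succ_eval]
  ring

lemma succ_succ (k i : ℕ) :
    multiplierCoeff x c (k + 1) (i + 1)
      = -c * (x + k + (i + 1)) * multiplierCoeff x c k (i + 1) + multiplierCoeff x c k i := by
  rcases lt_trichotomy i k with hlt | rfl | hgt
  · obtain ⟨n, rfl⟩ : ∃ n, k = i + 1 + n := ⟨k - (i + 1), by omega⟩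
    have hchoose :
        ((i + 1 + n).choose (i + 1) * (i + 1) : ℂ) = (i + 1 + n).choose i * (n + 1) := by
      exact_mod_cast (Nat.choose_succ_right_eq (i + 1 + n) i).trans (by congr 1; omega)
    simp only [multiplierCoeff, Nat.choose_succ_succ' (i + 1 + n) i,
      show i + 1 + n + 1 - (i + 1) = n + 1 by omega, show i + 1 + n - (i + 1) = n by omega,
      show i + 1 + n - i = n + 1 by omega]
    rw [ascPochhammer_succ_eval_left n (x + i), ascPochhammer_succ_eval,
      show x + ↑(i + 1) = x + i + 1 by push_cast; ring]
    push_cast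
    linear_combination (-(-c) ^ (n + 1) * (ascPochhammer ℂ n).eval (x + i + 1)) * hchoose
  · rw [of_lt x c (Nat.lt_succ_self i), self, self]
    ring
  · rw [of_lt x c (by omega), of_lt x c (by omega), of_lt x c hgt]
    ring

lemma sum_range_succ (k : ℕ) (u : ℕ → ℂ) :
    ∑ i ∈ range (k + 2), multiplierCoeff x c (k + 1) i * u i
      = ∑ i ∈ range (k + 1), (-c * (x + k + i) * multiplierCoeff x c k i * u i
          + multiplierCoeff x c k i * u (i + 1)) := by
  set A : ℕ → ℂ := fun i => -c * (x + k + i) * multiplierCoeff x c k i * u i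
  have hA : A (k + 1) = 0 := by simp only [A, of_lt x c (Nat.lt_succ_self k), mul_zero, zero_mul]
  calc ∑ i ∈ range (k + 2), multiplierCoeff x c (k + 1) i * u i
      = ∑ i ∈ range (k + 1), (A (i + 1) + multiplierCoeff x c k i * u (i + 1)) + A 0 := by
        rw [Finset.sum_range_succ', succ_zero]
        congr 1
        · refine sum_congr rfl fun i _ => ?_
          simp only [A, succ_succ]; push_cast; ring
        · simp only [A, Nat.cast_zero, add_zero]
    _ = ∑ i ∈ range (k + 2), A i
          + ∑ i ∈ range (k + 1), multiplierCoeff x c k i * u (i + 1) := by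
        rw [Finset.sum_range_succ' A, sum_add_distrib]; ring
    _ = _ := by rw [Finset.sum_range_succ, hA, add_zero, sum_add_distrib]

end multiplierCoeff

lemma iteratedDerivWithin_eq_sum_multiplierCoeff {s : Set ℂ} (hs : UniqueDiffOn ℂ s) {x c : ℂ}
    {T : ℕ → ℕ → ℂ → ℂ}
    (hT : ∀ m i, ∀ z ∈ s,
      HasDerivAt (T m i) (-c * (x + m) * T (m + 1) i z + T (m + 2) (i + 1) z) z)
    (k : ℕ) :
    ∀ z ∈ s, iteratedDerivWithin k (T 0 0) s z
      = ∑ i ∈ range (k + 1), multiplierCoeff x c k i * T (k + i) i z := by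
  induction k with
  | zero => simp [multiplierCoeff]
  | succ k ih =>
    intro z hz
    have hderiv :
        HasDerivAt (fun w => ∑ i ∈ range (k + 1), multiplierCoeff x c k i * T (k + i) i w)
        (∑ i ∈ range (k + 1), multiplierCoeff x c k i
          * (-c * (x + ↑(k + i)) * T (k + i + 1) i z + T (k + i + 2) (i + 1) z)) z :=
      HasDerivAt.fun_sum fun i _ => (hT (k + i) i z hz).const_mul _
    rw [iteratedDerivWithin_succ, derivWithin_congr ih (ih z hz),
      hderiv.hasDerivWithinAt.derivWithin (hs z hz), multiplierCoeff.sum_range_succ]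
    refine sum_congr rfl fun i _ => ?_
    rw [show k + 1 + i = k + i + 1 by omega, show k + 1 + (i + 1) = k + i + 2 by omega]
    push_cast
    ring

section

variable {s : Set ℂ} {f g L : ℂ → ℂ}

lemma hasDerivAt_of_cexp_eq_derivWithin (hs : IsOpen s) (hg : DifferentiableOn ℂ g s)
    (hbranch : ∀ z ∈ s, exp (L z) = derivWithin g s z) {z : ℂ} (hz : z ∈ s) :
    HasDerivAt g (exp (L z)) z := by
  rw [hbranch z hz, derivWithin_of_isOpen hs hz]
  exact (hg.differentiableAt (hs.mem_nhds hz)).hasDerivAt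

lemma hasDerivAt_branch_of_second_deriv (hs : IsOpen s) (hL : DifferentiableOn ℂ L s)
    (hbranch : ∀ z ∈ s, exp (L z) = derivWithin g s z) {a : ℂ}
    (hsecond : ∀ z ∈ s, derivWithin (derivWithin g s) s z = a * exp ((3 / 2 : ℂ) * L z))
    {z : ℂ} (hz : z ∈ s) :
    HasDerivAt L (a * exp ((1 / 2 : ℂ) * L z)) z := by
  have hLz : HasDerivAt L (deriv L z) z := (hL.differentiableAt (hs.mem_nhds hz)).hasDerivAt
  have hg' : HasDerivAt (derivWithin g s) (exp (L z) * deriv L z) z :=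
    hLz.cexp.congr_of_eventuallyEq (Filter.eventuallyEq_of_mem (hs.mem_nhds hz) hbranch).symm
  have hchain : exp (L z) * deriv L z = exp (L z) * (a * exp ((1 / 2 : ℂ) * L z)) := by
    rw [← hg'.deriv, ← derivWithin_of_isOpen hs hz, hsecond z hz, mul_left_comm, ← exp_add]
    ring_nf
  rwa [mul_left_cancel₀ (exp_ne_zero (L z)) hchain] at hLz

lemma hasDerivAt_iteratedDerivWithin_comp (hs : IsOpen s) (hf : DifferentiableOn ℂ f s) (i : ℕ)
    {z g' : ℂ} (hgz : g z ∈ s) (hg : HasDerivAt g g' z) :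
    HasDerivAt (fun w => iteratedDerivWithin i f s (g w))
      (iteratedDerivWithin (i + 1) f s (g z) * g') z := by
  have hFi : DifferentiableOn ℂ (iteratedDerivWithin i f s) s :=
    (hf.contDiffOn (n := ⊤) hs).differentiableOn_iteratedDerivWithin (WithTop.coe_lt_top _)
      hs.uniqueDiffOn
  have h := (hFi.differentiableAt (hs.mem_nhds hgz)).hasDerivAt
  rw [← derivWithin_of_isOpen hs hgz, ← iteratedDerivWithin_succ] at h
  exact h.comp z hg

lemma hasDerivAt_cexp_mul_iteratedDerivWithin_comp (hs : IsOpen s) (hf : DifferentiableOn ℂ f s)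
    {c z : ℂ} (hgz : g z ∈ s) (hg : HasDerivAt g (exp (L z)) z)
    (hL : HasDerivAt L (-2 * c * exp ((1 / 2 : ℂ) * L z)) z) (β : ℂ) (i : ℕ) :
    HasDerivAt (fun w => exp (β * L w) * iteratedDerivWithin i f s (g w))
      (-c * (2 * β) * (exp ((β + 1 / 2) * L z) * iteratedDerivWithin i f s (g z))
        + exp ((β + 1) * L z) * iteratedDerivWithin (i + 1) f s (g z)) z := by
  refine (((hL.const_mul β).cexp).mul
    (hasDerivAt_iteratedDerivWithin_comp hs hf i hgz hg)).congr_deriv ?_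
  rw [add_mul, add_mul, one_mul, exp_add, exp_add]
  ring

end

theorem deriv_formula_for_multiplier_general
    (g f L : ℂ → ℂ) (c : ℂ)
    (hg : DifferentiableOn ℂ g (ball (0:ℂ) 1))
    (hgmap : Set.MapsTo g (ball (0:ℂ) 1) (ball (0:ℂ) 1))
    (hf : DifferentiableOn ℂ f (ball (0:ℂ) 1))
    (hL : DifferentiableOn ℂ L (ball (0:ℂ) 1))
    (hbranch : ∀ z ∈ ball (0:ℂ) 1, Complex.exp (L z) = derivWithin g (ball (0:ℂ) 1) z)
    (hsecond : ∀ z ∈ ball (0:ℂ) 1,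
      derivWithin (derivWithin g (ball (0:ℂ) 1)) (ball (0:ℂ) 1) z
        = -2 * c * Complex.exp ((3/2 : ℂ) * L z))
    (ℓ : ℂ) (k : ℕ) :
    ∀ z ∈ ball (0:ℂ) 1,
      iteratedDerivWithin k
          (fun w => Complex.exp (ℓ * L w) * f (g w)) (ball (0:ℂ) 1) z
        = ∑ i ∈ range (k + 1),
            (k.choose i : ℂ) * (ascPochhammer ℂ (k - i)).eval (2 * ℓ + i)
              * (-c) ^ (k - i)
              * Complex.exp ((ℓ + (k + i : ℂ) / 2) * L z)
              * iteratedDerivWithin i f (ball (0:ℂ) 1) (g z) := by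
  set s := ball (0:ℂ) 1
  have hs : IsOpen s := isOpen_ball
  let T : ℕ → ℕ → ℂ → ℂ := fun m i w =>
    exp ((ℓ + m / 2) * L w) * iteratedDerivWithin i f s (g w)
  have hT : ∀ m i, ∀ z ∈ s,
      HasDerivAt (T m i) (-c * (2 * ℓ + m) * T (m + 1) i z + T (m + 2) (i + 1) z) z := by
    intro m i z hz
    refine (hasDerivAt_cexp_mul_iteratedDerivWithin_comp hs hf (hgmap hz)
      (hasDerivAt_of_cexp_eq_derivWithin hs hg hbranch hz)
      (hasDerivAt_branch_of_second_deriv hs hL hbranch hsecond hz) _ i).congr_deriv ?_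
    simp only [T]
    push_cast
    ring_nf
  intro z hz
  have hsum := iteratedDerivWithin_eq_sum_multiplierCoeff hs.uniqueDiffOn hT k z hz
  simp only [T, Nat.cast_zero, zero_div, add_zero, iteratedDerivWithin_zero] at hsum
  rw [hsum]
  refine sum_congr rfl fun i _ => ?_
  simp only [multiplierCoeff]
  push_cast
  ring

/-- If `g` is a holomorphic self-map of the unit disc with nonvanishing
derivative, `L` is a holomorphic branch of `log g'` on the disc (so `(g')^α := exp (α • L)`),
and `g'' = -2c·(g')^{3/2}` on the disc, then for every holomorphic `f` on the disc,
every `ℓ : ℂ` and every `k : ℕ`, the `k`-th derivative of `(g')^ℓ·(f ∘ g)` equals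
`∑_{i=0}^{k} C(k,i)·(2ℓ+i)_{k-i}·(-c)^{k-i}·(g')^{ℓ+(k+i)/2}·(f⁽ⁱ⁾ ∘ g)`. -/
theorem deriv_formula_for_multiplier
    (g f L : ℂ → ℂ) (c : ℂ)
    (hg : DifferentiableOn ℂ g (ball (0:ℂ) 1))
    (hgmap : Set.MapsTo g (ball (0:ℂ) 1) (ball (0:ℂ) 1))
    (hf : DifferentiableOn ℂ f (ball (0:ℂ) 1))
    (hL : DifferentiableOn ℂ L (ball (0:ℂ) 1))
    (hbranch : ∀ z ∈ ball (0:ℂ) 1, Complex.exp (L z) = derivWithin g (ball (0:ℂ) 1) z)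
    (hne : ∀ z ∈ ball (0:ℂ) 1, derivWithin g (ball (0:ℂ) 1) z ≠ 0)
    (hsecond : ∀ z ∈ ball (0:ℂ) 1,
      derivWithin (derivWithin g (ball (0:ℂ) 1)) (ball (0:ℂ) 1) z
        = -2 * c * Complex.exp ((3/2 : ℂ) * L z))
    (ℓ : ℂ) (k : ℕ) :
    ∀ z ∈ ball (0:ℂ) 1,
      iteratedDerivWithin k
          (fun w => Complex.exp (ℓ * L w) * f (g w)) (ball (0:ℂ) 1) z
        = ∑ i ∈ range (k + 1),
            (k.choose i : ℂ) * (ascPochhammer ℂ (k - i)).eval (2 * ℓ + i)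
              * (-c) ^ (k - i)
              * Complex.exp ((ℓ + (k + i : ℂ) / 2) * L z)
              * iteratedDerivWithin i f (ball (0:ℂ) 1) (g z) :=
  deriv_formula_for_multiplier_general g f L c hg hgmap hf hL hbranch hsecond ℓ k
end

section
/- Fix real λ and a positive integer m with 2λ − m > 0, set 2λⱼ = 2λ − m + 2j. The linear maps Γⱼ: A^{(λⱼ)}(𝔻) → Hol(𝔻, ℂ^{m+1}) defined by (Γⱼf)_ℓ = binom(ℓ,j)·(1/(2λⱼ)_{ℓ−j})·f^{(ℓ−j)} for ℓ ≥ j and 0 for ℓ < j, have images whose algebraic sum is direct: if Σⱼ Γⱼfⱼ = 0 with fⱼ holomorphic, then all fⱼ = 0. -/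
/-!
The system `Σⱼ Γⱼ fⱼ = 0` is unitriangular: the diagonal entry `j = ℓ` is the identity
(`C(ℓ,ℓ) = 1`, `(x)₀ = 1`, zeroth derivative), the entries with `j > ℓ` vanish, and an entry
with `j < ℓ` sees `fⱼ` only through its derivatives on the disc. Strong induction on `ℓ`
therefore shows `fℓ = 0`.
-/

open Metric Finset

/-- The `ℓ`-th component of `Γⱼ g`, with derivatives taken within `s`. -/
noncomputable def gammaComponent (lam : ℝ) (m ℓ j : ℕ) (g : ℂ → ℂ) (s : Set ℂ) (z : ℂ) : ℂ :=
  if j ≤ ℓ then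
    (ℓ.choose j : ℂ) * (((ascPochhammer ℝ (ℓ - j)).eval (2 * lam - m + 2 * j) : ℝ) : ℂ)⁻¹
      * iteratedDerivWithin (ℓ - j) g s z
  else 0

section gammaComponent

variable (lam : ℝ) (m : ℕ) {ℓ j : ℕ} (g : ℂ → ℂ) (s : Set ℂ) (z : ℂ)

theorem gammaComponent_self : gammaComponent lam m ℓ ℓ g s z = g z := by
  simp [gammaComponent]

theorem gammaComponent_of_lt (h : ℓ < j) : gammaComponent lam m ℓ j g s z = 0 :=
  if_neg h.not_ge

variable {g s z}

theorem gammaComponent_of_eqOn_zero (hg : Set.EqOn g 0 s) (hz : z ∈ s) :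
    gammaComponent lam m ℓ j g s z = 0 := by
  simp [gammaComponent, iteratedDerivWithin_congr hg hz]

end gammaComponent

theorem eqOn_zero_of_sum_unitriangular {ι X M : Type*} [LinearOrder ι] [Fintype ι]
    [WellFoundedLT ι] [AddCommMonoid M] {s : Set X} (T : ι → ι → (X → M) → X → M)
    (hdiag : ∀ i g, ∀ x ∈ s, T i i g x = g x)
    (hupper : ∀ i j g x, i < j → T i j g x = 0)
    (hlocal : ∀ i j g, j < i → Set.EqOn g 0 s → ∀ x ∈ s, T i j g x = 0)
    (f : ι → X → M) (hsum : ∀ x ∈ s, ∀ i, ∑ j, T i j (f j) x = 0) :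
    ∀ i, Set.EqOn (f i) 0 s := by
  intro i
  induction i using WellFoundedLT.induction with
  | _ i ih =>
    intro x hx
    have hoff : ∀ j, j ≠ i → T i j (f j) x = 0 := fun j hji ↦
      hji.lt_or_gt.elim (fun hlt ↦ hlocal i j _ hlt (ih j hlt) x hx) (hupper i j _ x)
    calc f i x = T i i (f i) x := (hdiag i (f i) x hx).symm
      _ = ∑ j, T i j (f j) x := (sum_eq_single i (fun j _ ↦ hoff j) (by simp)).symm
      _ = 0 := hsum x hx i

theorem gamma_images_sum_direct_general
    (m : ℕ) (lam : ℝ)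
    (f : Fin (m + 1) → ℂ → ℂ)
    (hsum : ∀ z ∈ ball (0:ℂ) 1, ∀ ℓ : Fin (m + 1),
      ∑ j : Fin (m + 1),
        (if (j : ℕ) ≤ (ℓ : ℕ) then
            ((ℓ : ℕ).choose (j : ℕ) : ℂ)
              * (((ascPochhammer ℝ ((ℓ : ℕ) - (j : ℕ))).eval
                    (2 * lam - m + 2 * (j : ℕ)) : ℝ) : ℂ)⁻¹
              * iteratedDerivWithin ((ℓ : ℕ) - (j : ℕ)) (f j) (ball (0:ℂ) 1) z
          else 0) = 0) :
    ∀ j : Fin (m + 1), ∀ z ∈ ball (0:ℂ) 1, f j z = 0 :=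
  eqOn_zero_of_sum_unitriangular
    (fun (ℓ j : Fin (m + 1)) g ↦ gammaComponent lam m ℓ j g (ball 0 1))
    (fun _ g z _ ↦ gammaComponent_self lam m g _ z)
    (fun _ _ g z h ↦ gammaComponent_of_lt lam m g _ z h)
    (fun _ _ _ _ hg _ hz ↦ gammaComponent_of_eqOn_zero lam m hg hz) f hsum

/-- Fix `λ` real and `m ≥ 1` with `2λ - m > 0` and set `2λⱼ = 2λ - m + 2j`.
The maps `Γⱼ` sending a holomorphic function `f` on the disc to the `ℂ^{m+1}`-valued
function with `ℓ`-th component `C(ℓ,j)·(2λⱼ)_{ℓ-j}⁻¹·f^{(ℓ-j)}` for `ℓ ≥ j` (and `0` for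
`ℓ < j`) have images whose algebraic sum is direct: if `Σⱼ Γⱼ fⱼ = 0` on the disc with
all `fⱼ` holomorphic on the disc, then every `fⱼ` vanishes on the disc. -/
theorem gamma_images_sum_direct
    (m : ℕ) (hm : 0 < m) (lam : ℝ) (hlam : (m : ℝ) < 2 * lam)
    (f : Fin (m + 1) → ℂ → ℂ)
    (hf : ∀ j, DifferentiableOn ℂ (f j) (ball (0:ℂ) 1))
    (hsum : ∀ z ∈ ball (0:ℂ) 1, ∀ ℓ : Fin (m + 1),
      ∑ j : Fin (m + 1),
        (if (j : ℕ) ≤ (ℓ : ℕ) then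
            ((ℓ : ℕ).choose (j : ℕ) : ℂ)
              * (((ascPochhammer ℝ ((ℓ : ℕ) - (j : ℕ))).eval
                    (2 * lam - m + 2 * (j : ℕ)) : ℝ) : ℂ)⁻¹
              * iteratedDerivWithin ((ℓ : ℕ) - (j : ℕ)) (f j) (ball (0:ℂ) 1) z
          else 0) = 0) :
    ∀ j : Fin (m + 1), ∀ z ∈ ball (0:ℂ) 1, f j z = 0 :=
  gamma_images_sum_direct_general m lam f hsum
end

section
/- With the multiplier J(g,z)_{p,ℓ} = binom(p,ℓ)·(−c)^{p−ℓ}·g'(z)^{λ−m/2+(p+ℓ)/2} for p ≥ ℓ (and 0 for p < ℓ), where c = c_g satisfies g'' = −2c(g')^{3/2}, one has Γⱼ(D⁺_{λⱼ}(g^{-1})f) = J(g,·)·((Γⱼf)∘g) for every j with 0 ≤ j ≤ m and every f in A^{(λⱼ)}(𝔻). That is, the same matrix multiplier J intertwines the discrete series action with the Γⱼ-transferred action for every j. -/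
/-!
Write `g' = e^L`. The hypothesis `g'' = -2c (g')^{3/2}` says `L' = -2c e^{L/2}`, so the derivative
of `e^{aL} · f^{(k)} ∘ g` is `-2ca · e^{(a+1/2)L} · f^{(k)} ∘ g + e^{(a+1)L} · f^{(k+1)} ∘ g`, and
by induction on `n`
  `(e^{νL} · f ∘ g)^{(n)} = ∑ₖ C(n,k) (2ν+k)_{n-k} (-c)^{n-k} e^{(ν+(n+k)/2)L} · f^{(k)} ∘ g`.
For `n = p - j` and `ν = λⱼ`, the factorisation `(2λⱼ)_{p-j} = (2λⱼ)_k (2λⱼ+k)_{p-j-k}` and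
`C(p,j) C(p-j,k) = C(p,j+k) C(j+k,j)` turn the `k`-th term of
`C(p,j) (2λⱼ)_{p-j}⁻¹ (e^{λⱼL} · f ∘ g)^{(p-j)}` into `J(g,·)_{p,j+k} · (Γⱼ f)_{j+k} ∘ g`;
the Pochhammer symbols are nonzero since `2λⱼ > 0`.
-/

open Metric Finset Complex Polynomial

theorem ascPochhammer_eval_add {S : Type*} [CommSemiring S] (k r : ℕ) (x : S) :
    (ascPochhammer S (k + r)).eval x
      = (ascPochhammer S k).eval x * (ascPochhammer S r).eval (x + k) := by
  rw [← ascPochhammer_mul, eval_mul, eval_comp]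
  simp

theorem ascPochhammer_eval_ofReal_ne_zero {s : ℝ} (hs : 0 < s) (n : ℕ) :
    (ascPochhammer ℂ n).eval (s : ℂ) ≠ 0 := by
  rw [show (s : ℂ) = ofRealHom s from rfl, ascPochhammer_eval₂ ofRealHom, eval₂_at_apply]
  exact ofReal_ne_zero.mpr (ascPochhammer_pos n s hs).ne'

theorem sum_range_eq_sum_fin_ite {M : Type*} [AddCommMonoid M] {m j p : ℕ} (hjp : j ≤ p)
    (hp : p < m + 1) (T : ℕ → M) :
    ∑ k ∈ range (p - j + 1), T k
      = ∑ ℓ : Fin (m + 1), if j ≤ (ℓ : ℕ) ∧ (ℓ : ℕ) ≤ p then T (ℓ - j) else 0 := by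
  rw [Fin.sum_univ_eq_sum_range (fun ℓ => if j ≤ ℓ ∧ ℓ ≤ p then T (ℓ - j) else 0),
    ← sum_filter, show {ℓ ∈ range (m + 1) | j ≤ ℓ ∧ ℓ ≤ p} = Ico j (p + 1) by
      ext; simp only [mem_filter, mem_range, mem_Ico]; omega,
    sum_Ico_eq_sum_range, Nat.sub_add_comm hjp]
  simp only [Nat.add_sub_cancel_left]

noncomputable def discreteSeriesCoeff (c ν : ℂ) (n k : ℕ) : ℂ :=
  n.choose k * (ascPochhammer ℂ (n - k)).eval (2 * ν + k) * (-c) ^ (n - k)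

section Coefficients

variable {c ν : ℂ} {n k : ℕ}

theorem discreteSeriesCoeff_of_lt (h : n < k) : discreteSeriesCoeff c ν n k = 0 := by
  simp [discreteSeriesCoeff, Nat.choose_eq_zero_of_lt h]

theorem discreteSeriesCoeff_self : discreteSeriesCoeff c ν n n = 1 := by
  simp [discreteSeriesCoeff]

theorem discreteSeriesCoeff_succ_zero :
    discreteSeriesCoeff c ν (n + 1) 0 = -c * (2 * ν + n) * discreteSeriesCoeff c ν n 0 := by
  simp only [discreteSeriesCoeff, Nat.choose_zero_right, Nat.sub_zero, Nat.cast_zero, add_zero,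
    ascPochhammer_succ_eval, pow_succ]
  ring

theorem discreteSeriesCoeff_succ_succ :
    discreteSeriesCoeff c ν (n + 1) (k + 1)
      = discreteSeriesCoeff c ν n k
        + -c * (2 * ν + n + k + 1) * discreteSeriesCoeff c ν n (k + 1) := by
  rcases lt_trichotomy k n with hkn | rfl | hnk
  · obtain ⟨r, rfl⟩ : ∃ r, n = k + 1 + r := ⟨n - (k + 1), by omega⟩
    have hpascal : ((k + 1 + r + 1).choose (k + 1) : ℂ)
        = (k + 1 + r).choose k + (k + 1 + r).choose (k + 1) := by
      exact_mod_cast Nat.choose_succ_succ (k + 1 + r) k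
    have habsorb : ((k + 1 + r).choose (k + 1) * (k + 1) : ℂ)
        = (k + 1 + r).choose k * (r + 1) := by
      have := Nat.choose_succ_right_eq (k + 1 + r) k
      rw [show k + 1 + r - k = r + 1 by omega] at this
      exact_mod_cast this
    have hPleft := ascPochhammer_eval_add 1 r (2 * ν + k)
    rw [add_comm 1 r, ascPochhammer_one, eval_X, Nat.cast_one, add_assoc] at hPleft
    simp only [discreteSeriesCoeff, show k + 1 + r + 1 - (k + 1) = r + 1 by omega,
      show k + 1 + r - k = r + 1 by omega, show k + 1 + r - (k + 1) = r by omega,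
      hPleft, ascPochhammer_succ_eval, pow_succ]
    push_cast
    linear_combination (ascPochhammer ℂ r).eval (2 * ν + (k + 1)) * (-c) ^ r * (-c) *
      ((2 * ν + (k + 1 + r : ℂ)) * hpascal - habsorb)
  · simp [discreteSeriesCoeff_self, discreteSeriesCoeff_of_lt (Nat.lt_succ_self k)]
  · simp [discreteSeriesCoeff_of_lt hnk, discreteSeriesCoeff_of_lt (Nat.succ_lt_succ hnk),
      discreteSeriesCoeff_of_lt (hnk.trans (Nat.lt_succ_self k))]

theorem sum_discreteSeriesCoeff_succ (u : ℕ → ℂ) :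
    ∑ k ∈ range (n + 1), discreteSeriesCoeff c ν n k * (-c * (2 * ν + n + k) * u k + u (k + 1))
      = ∑ k ∈ range (n + 2), discreteSeriesCoeff c ν (n + 1) k * u k := by
  have hshift : ∑ k ∈ range (n + 1), discreteSeriesCoeff c ν n k * (-c * (2 * ν + n + k) * u k)
      = discreteSeriesCoeff c ν (n + 1) 0 * u 0 + ∑ k ∈ range (n + 1),
          -c * (2 * ν + n + k + 1) * discreteSeriesCoeff c ν n (k + 1) * u (k + 1) := by
    rw [sum_range_succ', sum_range_succ _ n, discreteSeriesCoeff_of_lt (Nat.lt_succ_self n),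
      discreteSeriesCoeff_succ_zero, add_comm]
    push_cast
    simp only [mul_zero, zero_mul, add_zero]
    congr 1
    · ring
    · exact sum_congr rfl fun k _ => by ring
  calc _ = ∑ k ∈ range (n + 1), discreteSeriesCoeff c ν n k * (-c * (2 * ν + n + k) * u k)
        + ∑ k ∈ range (n + 1), discreteSeriesCoeff c ν n k * u (k + 1) := by
          rw [← sum_add_distrib]
          simp only [mul_add]
    _ = _ := by
      rw [hshift, sum_range_succ' _ (n + 1)]
      simp only [discreteSeriesCoeff_succ_succ, add_mul, sum_add_distrib]
      ring

theorem choose_mul_inv_ascPochhammer_mul_discreteSeriesCoeff {μ : ℂ} {j ℓ p : ℕ}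
    (hjℓ : j ≤ ℓ) (hℓp : ℓ ≤ p) (hP : (ascPochhammer ℂ (p - j)).eval (2 * (μ + j)) ≠ 0)
    (E : ℂ → ℂ) (y : ℂ) :
    p.choose j * ((ascPochhammer ℂ (p - j)).eval (2 * (μ + j)))⁻¹
        * (discreteSeriesCoeff c (μ + j) (p - j) (ℓ - j)
          * (E (μ + j + (↑(p - j) + ↑(ℓ - j)) / 2) * y))
      = p.choose ℓ * (-c) ^ (p - ℓ) * E (μ + (p + ℓ) / 2)
        * (ℓ.choose j * ((ascPochhammer ℂ (ℓ - j)).eval (2 * (μ + j)))⁻¹ * y) := by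
  obtain ⟨k, rfl⟩ : ∃ k, ℓ = j + k := ⟨ℓ - j, by omega⟩
  obtain ⟨r, rfl⟩ : ∃ r, p = j + k + r := ⟨p - (j + k), by omega⟩
  have hchoose : ((j + k + r).choose (j + k) * (j + k).choose j : ℂ)
      = (j + k + r).choose j * (k + r).choose k := by
    have := Nat.choose_mul (n := j + k + r) (k := j + k) (s := j) (by omega)
    rw [show j + k + r - j = k + r by omega, Nat.add_sub_cancel_left] at this
    exact_mod_cast this
  have hexponent : μ + j + (↑(k + r) + k) / 2 = μ + (↑(j + k + r) + ↑(j + k)) / 2 := by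
    push_cast; ring
  rw [show j + k + r - j = k + r by omega] at hP ⊢
  rw [show j + k + r - (j + k) = r by omega, Nat.add_sub_cancel_left, hexponent,
    ascPochhammer_eval_add]
  rw [ascPochhammer_eval_add] at hP
  obtain ⟨hPk, hPr⟩ := mul_ne_zero_iff.mp hP
  simp only [discreteSeriesCoeff, Nat.add_sub_cancel_left]
  generalize E _ = e
  field_simp
  linear_combination -(-c) ^ r * e * y * hchoose

end Coefficients

section Calculus

variable {f g L : ℂ → ℂ} {c : ℂ}

theorem hasDerivAt_of_exp_eq_derivWithin {U : Set ℂ} (hU : IsOpen U)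
    (hL : DifferentiableOn ℂ L U) (hexp : ∀ z ∈ U, exp (L z) = derivWithin g U z)
    {z : ℂ} (hz : z ∈ U) :
    HasDerivAt L (derivWithin (derivWithin g U) U z / exp (L z)) z := by
  have hLz := (hL.differentiableAt (hU.mem_nhds hz)).hasDerivAt
  have hg' : HasDerivAt (derivWithin g U) (exp (L z) * deriv L z) z :=
    hLz.cexp.congr_of_eventuallyEq <|
      Filter.eventually_of_mem (hU.mem_nhds hz) fun w hw => (hexp w hw).symm
  rw [derivWithin_of_isOpen hU hz, hg'.deriv, mul_div_cancel_left₀ _ (exp_ne_zero _)]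
  exact hLz

theorem hasDerivAt_exp_mul_iteratedDeriv_comp {z : ℂ} (a : ℂ) (k : ℕ)
    (hgz : HasDerivAt g (exp (L z)) z) (hLz : HasDerivAt L (-2 * c * exp (L z / 2)) z)
    (hfz : DifferentiableAt ℂ (iteratedDeriv k f) (g z)) :
    HasDerivAt (fun w => exp (a * L w) * iteratedDeriv k f (g w))
      (-c * (2 * a) * (exp ((a + 1 / 2) * L z) * iteratedDeriv k f (g z))
        + exp ((a + 1) * L z) * iteratedDeriv (k + 1) f (g z)) z := by
  have hexp := (hLz.const_mul a).cexp
  have hcomp : HasDerivAt (fun w => iteratedDeriv k f (g w))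
      (iteratedDeriv (k + 1) f (g z) * exp (L z)) z := by
    rw [iteratedDeriv_succ]
    exact hfz.hasDerivAt.comp z hgz
  refine (hexp.fun_mul hcomp).congr_deriv ?_
  rw [add_mul, add_mul, exp_add, exp_add, one_mul, show 1 / 2 * L z = L z / 2 by ring]
  ring

theorem iteratedDeriv_exp_mul_comp {U V : Set ℂ} (hU : IsOpen U) (hV : IsOpen V)
    (hgUV : Set.MapsTo g U V) (hf : DifferentiableOn ℂ f V)
    (hg : ∀ z ∈ U, HasDerivAt g (exp (L z)) z)
    (hL : ∀ z ∈ U, HasDerivAt L (-2 * c * exp (L z / 2)) z) (ν : ℂ) (n : ℕ) :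
    Set.EqOn (iteratedDeriv n fun w => exp (ν * L w) * f (g w))
      (fun z => ∑ k ∈ range (n + 1), discreteSeriesCoeff c ν n k
        * (exp ((ν + (n + k) / 2) * L z) * iteratedDeriv k f (g z))) U := by
  have hfk (k : ℕ) : DifferentiableOn ℂ (iteratedDeriv k f) V := by
    rw [iteratedDeriv_eq_iterate]
    exact ((hf.analyticOnNhd hV).iterated_deriv k).differentiableOn
  induction n with
  | zero => intro z _; simp [discreteSeriesCoeff]
  | succ n ih =>
    intro z hz
    have hterm : ∀ k ∈ range (n + 1), HasDerivAt
        (fun w => discreteSeriesCoeff c ν n k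
          * (exp ((ν + (n + k) / 2) * L w) * iteratedDeriv k f (g w)))
        (discreteSeriesCoeff c ν n k
          * (-c * (2 * ν + n + k) * (exp ((ν + (↑(n + 1) + k) / 2) * L z) * iteratedDeriv k f (g z))
            + exp ((ν + (↑(n + 1) + ↑(k + 1)) / 2) * L z) * iteratedDeriv (k + 1) f (g z))) z := by
      intro k _
      refine ((hasDerivAt_exp_mul_iteratedDeriv_comp (ν + (n + k) / 2) k (hg z hz) (hL z hz)
        ((hfk k).differentiableAt (hV.mem_nhds (hgUV hz)))).const_mul _).congr_deriv ?_
      rw [show ν + (n + k) / 2 + 1 / 2 = ν + (↑(n + 1) + k) / 2 by push_cast; ring,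
        show ν + (n + k) / 2 + 1 = ν + (↑(n + 1) + ↑(k + 1)) / 2 by push_cast; ring]
      ring
    rw [iteratedDeriv_succ, (ih.eventuallyEq_of_mem (hU.mem_nhds hz)).deriv_eq,
      (HasDerivAt.fun_sum hterm).deriv, sum_discreteSeriesCoeff_succ
        fun k => exp ((ν + (↑(n + 1) + k) / 2) * L z) * iteratedDeriv k f (g z)]

end Calculus

theorem gamma_intertwines_discrete_series_general
    (m : ℕ) (lam : ℝ) (hlam : (m : ℝ) < 2 * lam)
    (g f L : ℂ → ℂ) (c : ℂ)
    (hg : DifferentiableOn ℂ g (ball (0:ℂ) 1))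
    (hgmap : Set.MapsTo g (ball (0:ℂ) 1) (ball (0:ℂ) 1))
    (hf : DifferentiableOn ℂ f (ball (0:ℂ) 1))
    (hL : DifferentiableOn ℂ L (ball (0:ℂ) 1))
    (hbranch : ∀ z ∈ ball (0:ℂ) 1, Complex.exp (L z) = derivWithin g (ball (0:ℂ) 1) z)
    (hsecond : ∀ z ∈ ball (0:ℂ) 1,
      derivWithin (derivWithin g (ball (0:ℂ) 1)) (ball (0:ℂ) 1) z
        = -2 * c * Complex.exp ((3/2 : ℂ) * L z))
    (j : Fin (m + 1)) :
    ∀ z ∈ ball (0:ℂ) 1, ∀ p : Fin (m + 1),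
      -- `p`-th component of `Γⱼ (D⁺_{λⱼ}(g⁻¹) f)` at `z`
      (if (j : ℕ) ≤ (p : ℕ) then
          ((p : ℕ).choose (j : ℕ) : ℂ)
            * ((ascPochhammer ℂ ((p : ℕ) - (j : ℕ))).eval
                (2 * (lam : ℂ) - (m : ℕ) + 2 * ((j : ℕ) : ℂ)))⁻¹
            * iteratedDerivWithin ((p : ℕ) - (j : ℕ))
                (fun w => Complex.exp (((lam : ℂ) - m / 2 + (j : ℕ)) * L w) * f (g w))
                (ball (0:ℂ) 1) z
        else 0)
      = ∑ ℓ : Fin (m + 1),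
          -- `J(g,z)_{p,ℓ}`
          (if (ℓ : ℕ) ≤ (p : ℕ) then
              ((p : ℕ).choose (ℓ : ℕ) : ℂ) * (-c) ^ ((p : ℕ) - (ℓ : ℕ))
                * Complex.exp
                    (((lam : ℂ) - m / 2 + ((p : ℕ) + (ℓ : ℕ) : ℂ) / 2) * L z)
            else 0)
          -- times the `ℓ`-th component of `Γⱼ f` at `g z`
          * (if (j : ℕ) ≤ (ℓ : ℕ) then
              ((ℓ : ℕ).choose (j : ℕ) : ℂ)
                * ((ascPochhammer ℂ ((ℓ : ℕ) - (j : ℕ))).eval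
                    (2 * (lam : ℂ) - (m : ℕ) + 2 * ((j : ℕ) : ℂ)))⁻¹
                * iteratedDerivWithin ((ℓ : ℕ) - (j : ℕ)) f (ball (0:ℂ) 1) (g z)
            else 0) := by
  intro z hz p
  set μ : ℂ := (lam : ℂ) - m / 2 with hμ
  have hP (r : ℕ) : (ascPochhammer ℂ r).eval (2 * (μ + (j : ℕ))) ≠ 0 := by
    rw [show 2 * (μ + (j : ℕ)) = ((2 * lam - m + 2 * (j : ℕ) : ℝ) : ℂ) by rw [hμ]; push_cast; ring]
    exact ascPochhammer_eval_ofReal_ne_zero (by linarith [(j : ℕ).cast_nonneg (α := ℝ)]) r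
  have hg' (w : ℂ) (hw : w ∈ ball (0 : ℂ) 1) : HasDerivAt g (exp (L w)) w := by
    rw [hbranch w hw, derivWithin_of_isOpen isOpen_ball hw]
    exact (hg.differentiableAt (isOpen_ball.mem_nhds hw)).hasDerivAt
  have hL' (w : ℂ) (hw : w ∈ ball (0 : ℂ) 1) : HasDerivAt L (-2 * c * exp (L w / 2)) w := by
    refine (hasDerivAt_of_exp_eq_derivWithin isOpen_ball hL hbranch hw).congr_deriv ?_
    rw [hsecond w hw, show 3 / 2 * L w = L w / 2 + L w by ring, exp_add]
    field_simp
  rw [show 2 * (lam : ℂ) - (m : ℕ) + 2 * ((j : ℕ) : ℂ) = 2 * (μ + (j : ℕ)) by rw [hμ]; ring]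
  split_ifs with hjp
  · rw [iteratedDerivWithin_of_isOpen isOpen_ball hz,
      iteratedDeriv_exp_mul_comp isOpen_ball isOpen_ball hgmap hf hg' hL' _ _ hz, mul_sum,
      sum_range_eq_sum_fin_ite hjp p.isLt]
    refine sum_congr rfl fun ℓ _ => ?_
    split_ifs with hℓ
    · rw [iteratedDerivWithin_of_isOpen isOpen_ball (hgmap hz)]
      exact choose_mul_inv_ascPochhammer_mul_discreteSeriesCoeff hℓ.1 hℓ.2 (hP _)
        (fun a => exp (a * L z)) _
    all_goals first | omega | simp
  · refine (sum_eq_zero fun ℓ _ => ?_).symm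
    split_ifs <;> first | omega | simp

/-- With the multiplier
`J(g,z)_{p,ℓ} = C(p,ℓ)·(-c)^{p-ℓ}·g'(z)^{λ-m/2+(p+ℓ)/2}` (for `p ≥ ℓ`, `0` otherwise),
where `g'' = -2c·(g')^{3/2}` and powers of `g'` are taken via a fixed holomorphic branch
`L` of `log g'`, one has `Γⱼ(D⁺_{λⱼ}(g⁻¹)f) = J(g,·)·((Γⱼ f) ∘ g)` for every `0 ≤ j ≤ m`
and every holomorphic `f` on the disc; here `D⁺_{λⱼ}(g⁻¹)f = (g')^{λⱼ}·(f∘g)` with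
`λⱼ = λ - m/2 + j`, and `Γⱼ` has components `C(ℓ,j)·(2λⱼ)_{ℓ-j}⁻¹·f^{(ℓ-j)}`. -/
theorem gamma_intertwines_discrete_series
    (m : ℕ) (hm : 0 < m) (lam : ℝ) (hlam : (m : ℝ) < 2 * lam)
    (g f L : ℂ → ℂ) (c : ℂ)
    (hg : DifferentiableOn ℂ g (ball (0:ℂ) 1))
    (hgmap : Set.MapsTo g (ball (0:ℂ) 1) (ball (0:ℂ) 1))
    (hf : DifferentiableOn ℂ f (ball (0:ℂ) 1))
    (hL : DifferentiableOn ℂ L (ball (0:ℂ) 1))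
    (hbranch : ∀ z ∈ ball (0:ℂ) 1, Complex.exp (L z) = derivWithin g (ball (0:ℂ) 1) z)
    (hsecond : ∀ z ∈ ball (0:ℂ) 1,
      derivWithin (derivWithin g (ball (0:ℂ) 1)) (ball (0:ℂ) 1) z
        = -2 * c * Complex.exp ((3/2 : ℂ) * L z))
    (j : Fin (m + 1)) :
    ∀ z ∈ ball (0:ℂ) 1, ∀ p : Fin (m + 1),
      -- `p`-th component of `Γⱼ (D⁺_{λⱼ}(g⁻¹) f)` at `z`
      (if (j : ℕ) ≤ (p : ℕ) then
          ((p : ℕ).choose (j : ℕ) : ℂ)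
            * ((ascPochhammer ℂ ((p : ℕ) - (j : ℕ))).eval
                (2 * (lam : ℂ) - (m : ℕ) + 2 * ((j : ℕ) : ℂ)))⁻¹
            * iteratedDerivWithin ((p : ℕ) - (j : ℕ))
                (fun w => Complex.exp (((lam : ℂ) - m / 2 + (j : ℕ)) * L w) * f (g w))
                (ball (0:ℂ) 1) z
        else 0)
      = ∑ ℓ : Fin (m + 1),
          -- `J(g,z)_{p,ℓ}`
          (if (ℓ : ℕ) ≤ (p : ℕ) then
              ((p : ℕ).choose (ℓ : ℕ) : ℂ) * (-c) ^ ((p : ℕ) - (ℓ : ℕ))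
                * Complex.exp
                    (((lam : ℂ) - m / 2 + ((p : ℕ) + (ℓ : ℕ) : ℂ) / 2) * L z)
            else 0)
          -- times the `ℓ`-th component of `Γⱼ f` at `g z`
          * (if (j : ℕ) ≤ (ℓ : ℕ) then
              ((ℓ : ℕ).choose (j : ℕ) : ℂ)
                * ((ascPochhammer ℂ ((ℓ : ℕ) - (j : ℕ))).eval
                    (2 * (lam : ℂ) - (m : ℕ) + 2 * ((j : ℕ) : ℂ)))⁻¹
                * iteratedDerivWithin ((ℓ : ℕ) - (j : ℕ)) f (ball (0:ℂ) 1) (g z)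
            else 0) :=
  gamma_intertwines_discrete_series_general m lam hlam g f L c hg hgmap hf hL hbranch hsecond j
end

section
/- If a projection P on ℂ^{m+1} commutes with every matrix T satisfying T_{k,n} = 0 unless k − n = 1 (i.e., with all one-step forward shifts with arbitrary weights), then P is trivial: P = 0 or P = I. -/
open Matrix

/-!
Commuting with the elementary matrix `E_{i+1,i}` forces column `i+1` and row `i` of `P` to vanish
off the diagonal and `P_{i+1,i+1} = P_{i,i}`. Since `P` is self-adjoint it also commutes with
`E_{i,i+1} = E_{i+1,i}ᴴ`, which kills the remaining off-diagonal entries, so `P` is a scalar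
matrix `c • 1`; idempotence gives `c² = c`, i.e. `c = 0` or `c = 1`.
-/

namespace Matrix

theorem single_succ_castSucc_apply_of_ne {α : Type*} [Zero α] {m : ℕ} (i : Fin m) (a : α)
    {k l : Fin (m + 1)} (h : (k : ℕ) ≠ l + 1) : single i.succ i.castSucc a k l = 0 :=
  if_neg fun ⟨hk, hl⟩ => h (by simp [← hk, ← hl])

theorem IsHermitian.commute_conjTranspose {α : Type*} [Semiring α] [StarRing α] {n : Type*}
    [Fintype n] {P T : Matrix n n α} (hP : P.IsHermitian) (h : Commute T P) :
    Commute Tᴴ P :=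
  commute_star_comm.mpr (by rwa [star_eq_conjTranspose, hP.eq])

theorem mem_range_scalar_of_commute_single_succ {α : Type*} [Semiring α] {m : ℕ}
    {M : Matrix (Fin (m + 1)) (Fin (m + 1)) α}
    (hsub : ∀ i : Fin m, Commute (single i.succ i.castSucc 1) M)
    (hsup : ∀ i : Fin m, Commute (single i.castSucc i.succ 1) M) :
    M ∈ Set.range (scalar (Fin (m + 1))) := by
  have hdiag : ∀ k, M k k = M 0 0 := Fin.induction rfl fun i ih =>
    (diag_eq_of_commute_single (hsub i)).trans ih
  refine ⟨M 0 0, Matrix.ext fun k l => ?_⟩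
  obtain rfl | hkl := eq_or_ne k l
  · simp [hdiag]
  rw [scalar_apply, diagonal_apply_ne _ hkl]
  obtain rfl | hl := eq_or_ne l 0
  · obtain ⟨i, rfl⟩ := Fin.exists_succ_eq.mpr hkl
    exact (row_eq_zero_of_commute_single (hsup i) hkl.symm).symm
  · obtain ⟨i, rfl⟩ := Fin.exists_succ_eq.mpr hl
    exact (col_eq_zero_of_commute_single (hsub i) hkl).symm

end Matrix

/-- If an orthogonal projection `P` on `ℂ^{m+1}` commutes with every
matrix `T` supported on the first subdiagonal (i.e. `T_{k,n} = 0` unless `k = n+1`),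
then `P` is trivial: `P = 0` or `P = 1`. -/
theorem projection_commuting_with_subdiagonal_is_trivial
    (m : ℕ) (P : Matrix (Fin (m + 1)) (Fin (m + 1)) ℂ)
    (hP1 : P.IsHermitian) (hP2 : P * P = P)
    (hcomm : ∀ T : Matrix (Fin (m + 1)) (Fin (m + 1)) ℂ,
      (∀ k n : Fin (m + 1), (k : ℕ) ≠ (n : ℕ) + 1 → T k n = 0) → P * T = T * P) :
    P = 0 ∨ P = 1 := by
  have hsub : ∀ i : Fin m, Commute (single i.succ i.castSucc 1) P := fun i =>
    (hcomm _ fun _ _ => single_succ_castSucc_apply_of_ne i 1).symm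
  have hsup : ∀ i : Fin m, Commute (single i.castSucc i.succ 1) P := fun i => by
    simpa using hP1.commute_conjTranspose (hsub i)
  obtain ⟨c, rfl⟩ := mem_range_scalar_of_commute_single_succ hsub hsup
  have hc : IsIdempotentElem c := scalar_inj.mp ((map_mul (scalar _) c c).trans hP2)
  rcases IsIdempotentElem.iff_eq_zero_or_one.mp hc with rfl | rfl <;> simp
end
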